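/- For every nonempty set I, every abelian group G whose exponent divides m (m ≥ 1), and all n, k ≥ 0 with n + k > 0, the Brandt semigroup B_{G,I} satisfies the semigroup identity u_{n,k,m} ≈ (u_{n,k,m})². -/

import Mathlib

universe u v

/-- Carrier of the Brandt semigroup `B_{G,I}`: `none` is the zero element. -/
def Brandt (I G : Type*) : Type _ := Option (I × G × I)

open Classical in
/-- Multiplication of the Brandt semigroup `B_{G,I}`. -/
noncomputable def bmul {I G : Type*} [Mul G] : Brandt I G → Brandt I G → Brandt I G
  | some (l1, g1, r1), some (l2, g2, r2) => if r1 = l2 then some (l1, g1 * g2, r2) else none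
  | _, _ => none

/-- Evaluation of a (nonempty) word, given as a list of variables, in a magma with an
explicit binary operation; the empty word evaluates to `none`. -/
def wEval {ι S : Type*} (mul : S → S → S) (ρ : ι → S) : List ι → Option S
  | [] => none
  | a :: l => some (l.foldl (fun s i => mul s (ρ i)) (ρ a))

/-- The word `u_{n,k,m} = x₁⋯x_{n+k}(xₙ⋯x₁·x_{n+1}⋯x_{n+k})^{2m-1}` (variables 0-indexed). -/
def uWord (n k m : ℕ) : List ℕ :=
  List.range (n + k) ++
    (List.replicate (2 * m - 1) ((List.range n).reverse ++ List.range' n k)).flatten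

/-!
A product of letters in `B_{G,I}` is nonzero exactly when the letters, read as edges
`l —g→ r` of a graph on `I`, form a path; the product is then (start, product of the labels, end).
Every letter occurs `2m` times in `u = x₁⋯x_{n+k}(xₙ⋯x₁·x_{n+1}⋯x_{n+k})^{2m-1}` and `G` is
abelian of exponent dividing `m`, so the label of a nonzero value of `u` is `1`. A word and its
reversal, both read as paths, either have the same endpoints or are both loops; this forces the
path `u` to be a loop. Hence a nonzero value of `u` is an idempotent `(i, 1, i)`.
-/

theorem wEval_eq_none_iff {ι S : Type*} {mul : S → S → S} {ρ : ι → S} {w : List ι} :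
    wEval mul ρ w = none ↔ w = [] := by
  cases w <;> simp [wEval]

theorem wEval_append {ι S : Type*} {mul : S → S → S} [Std.Associative mul] {ρ : ι → S}
    {w₁ w₂ : List ι} {x y : S} (h₁ : wEval mul ρ w₁ = some x) (h₂ : wEval mul ρ w₂ = some y) :
    wEval mul ρ (w₁ ++ w₂) = some (mul x y) := by
  cases w₁ with | nil => cases h₁ | cons a l₁ =>
  cases w₂ with | nil => cases h₂ | cons b l₂ =>
  simp only [wEval, List.cons_append, Option.some.injEq] at h₁ h₂ ⊢
  rw [← h₁, ← h₂, List.foldl_append, List.foldl_cons, ← List.foldl_map (g := mul),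
    ← List.foldl_map (g := mul) (l := l₂), List.foldl_assoc]

theorem range_add_eq_append (n k : ℕ) : List.range (n + k) = List.range n ++ List.range' n k := by
  rw [List.range_add, List.range'_eq_map_range]

theorem prod_map_uWord {M : Type*} [CommMonoid M] (f : ℕ → M) {n k m : ℕ} (hm : 1 ≤ m) :
    ((uWord n k m).map f).prod = ((List.range (n + k)).map f).prod ^ (2 * m) := by
  have hperm : ((List.range n).reverse ++ List.range' n k).Perm (List.range (n + k)) := by
    rw [range_add_eq_append]
    exact (List.reverse_perm _).append_right _
  rw [uWord, List.map_append, List.prod_append, List.map_flatten, List.map_replicate,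
    List.prod_flatten, List.map_replicate, List.prod_replicate, (hperm.map f).prod_eq,
    ← pow_succ']
  congr 1
  omega

namespace Brandt

variable {ι I G : Type*}

open Classical in
theorem some_bmul_some [Mul G] (l₁ : I) (g₁ : G) (r₁ l₂ : I) (g₂ : G) (r₂ : I) :
    bmul (some (l₁, g₁, r₁) : Brandt I G) (some (l₂, g₂, r₂)) =
      if r₁ = l₂ then some (l₁, g₁ * g₂, r₂) else none := rfl

theorem bmul_some_some [Mul G] (l : I) (g₁ : G) (t : I) (g₂ : G) (r : I) :
    bmul (some (l, g₁, t) : Brandt I G) (some (t, g₂, r)) = some (l, g₁ * g₂, r) := by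
  rw [some_bmul_some, if_pos rfl]

theorem exists_of_bmul_eq_some [Mul G] {x y : Brandt I G} {l r : I} {g : G}
    (h : bmul x y = some (l, g, r)) :
    ∃ g₁ t g₂, x = some (l, g₁, t) ∧ y = some (t, g₂, r) ∧ g = g₁ * g₂ := by
  rcases x with _ | ⟨l₁, g₁, r₁⟩ <;> rcases y with _ | ⟨l₂, g₂, r₂⟩ <;> try cases h
  rw [some_bmul_some] at h
  split_ifs at h with ht
  subst ht
  cases h
  exact ⟨g₁, r₁, g₂, rfl, rfl, rfl⟩

theorem bmul_assoc [Semigroup G] (x y z : Brandt I G) :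
    bmul (bmul x y) z = bmul x (bmul y z) := by
  rcases x with _ | ⟨l₁, g₁, r₁⟩ <;> rcases y with _ | ⟨l₂, g₂, r₂⟩ <;>
    rcases z with _ | ⟨l₃, g₃, r₃⟩ <;> unfold bmul <;> (try by_cases r₁ = l₂) <;>
    (try by_cases r₂ = l₃) <;> simp_all [mul_assoc] <;> rfl

instance [Semigroup G] : Std.Associative (bmul : Brandt I G → Brandt I G → Brandt I G) :=
  ⟨bmul_assoc⟩

def label [One G] : Brandt I G → G
  | some (_, g, _) => g
  | none => 1

inductive IsPath (ρ : ι → Brandt I G) : List ι → I → I → Prop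
  | nil (p : I) : IsPath ρ [] p p
  | cons {i : ι} {w : List ι} {p q r : I} {g : G} :
      ρ i = some (p, g, q) → IsPath ρ w q r → IsPath ρ (i :: w) p r

namespace IsPath

variable {ρ : ι → Brandt I G}

theorem of_append {w₁ w₂ : List ι} {p r : I} (h : IsPath ρ (w₁ ++ w₂) p r) :
    ∃ q, IsPath ρ w₁ p q ∧ IsPath ρ w₂ q r := by
  induction w₁ generalizing p with
  | nil => exact ⟨p, nil p, h⟩
  | cons i w₁ ih =>
    obtain _ | ⟨hi, hw⟩ := h
    obtain ⟨q, h₁, h₂⟩ := ih hw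
    exact ⟨q, cons hi h₁, h₂⟩

theorem endpoints_eq_or_loops {w : List ι} {p q p' q' : I} (h : IsPath ρ w p q)
    (h' : IsPath ρ w p' q') : p = p' ∧ q = q' ∨ p = q ∧ p' = q' := by
  induction h generalizing p' with
  | nil => cases h'; exact .inr ⟨rfl, rfl⟩
  | cons hi _ ih =>
    obtain _ | ⟨hi', hw'⟩ := h'
    rw [hi] at hi'
    cases hi'
    rcases ih hw' with ⟨-, rfl⟩ | ⟨rfl, rfl⟩ <;> exact .inl ⟨rfl, rfl⟩

theorem reverse_endpoints_eq_or_loops {w : List ι} {p q p' q' : I} (h : IsPath ρ w p q)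
    (h' : IsPath ρ w.reverse p' q') : p = p' ∧ q = q' ∨ p = q ∧ p' = q' := by
  induction h generalizing p' q' with
  | nil => cases h'; exact .inr ⟨rfl, rfl⟩
  | cons hi _ ih =>
    rw [List.reverse_cons] at h'
    obtain ⟨t, hw', _ | ⟨hi', hnil⟩⟩ := h'.of_append
    cases hnil
    rw [hi] at hi'
    cases hi'
    rcases ih hw' with ⟨rfl, rfl⟩ | ⟨rfl, rfl⟩
    · exact .inr ⟨rfl, rfl⟩
    · exact .inl ⟨rfl, rfl⟩

theorem of_flatten_replicate {w : List ι} {j : ℕ} {p q : I}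
    (h : IsPath ρ (List.replicate (j + 1) w).flatten p q) : IsPath ρ w p q := by
  induction j generalizing p with
  | zero => simpa using h
  | succ j ih =>
    rw [List.replicate_succ, List.flatten_cons] at h
    obtain ⟨s, hw, hrest⟩ := h.of_append
    have hw' := ih hrest
    rcases hw.endpoints_eq_or_loops hw' with ⟨rfl, -⟩ | ⟨rfl, -⟩ <;> exact hw'

theorem eq_of_append_reverse_append {a c : List ι} {p s q : I} (h₁ : IsPath ρ (a ++ c) p s)
    (h₂ : IsPath ρ (a.reverse ++ c) s q) : q = p := by
  obtain ⟨t, ha, hc⟩ := h₁.of_append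
  obtain ⟨t', har, hc'⟩ := h₂.of_append
  rcases ha.reverse_endpoints_eq_or_loops har with ⟨rfl, rfl⟩ | ⟨rfl, rfl⟩ <;>
    rcases hc.endpoints_eq_or_loops hc' with ⟨h, h'⟩ | ⟨h, h'⟩ <;> subst_vars <;> rfl

end IsPath

theorem isPath_of_foldl_eq_some [Monoid G] {ρ : ι → Brandt I G} {l : List ι} {x : Brandt I G}
    {p r : I} {g : G} (h : l.foldl (fun s i => bmul s (ρ i)) x = some (p, g, r)) :
    ∃ g₀ q, x = some (p, g₀, q) ∧ IsPath ρ l q r ∧ g = g₀ * (l.map fun i => label (ρ i)).prod := by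
  induction l generalizing x with
  | nil => exact ⟨g, r, h, .nil r, (mul_one g).symm⟩
  | cons i l ih =>
    obtain ⟨g₀, q, hx, hl, rfl⟩ := ih h
    obtain ⟨g₁, t, g₂, rfl, hi, rfl⟩ := exists_of_bmul_eq_some hx
    refine ⟨g₁, t, rfl, .cons hi hl, ?_⟩
    rw [List.map_cons, List.prod_cons, hi, mul_assoc]
    rfl

theorem isPath_of_wEval_eq_some [Monoid G] {ρ : ι → Brandt I G} {w : List ι} {p r : I} {g : G}
    (h : wEval bmul ρ w = some (some (p, g, r))) :
    IsPath ρ w p r ∧ g = (w.map fun i => label (ρ i)).prod := by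
  cases w with
  | nil => cases h
  | cons a l =>
    obtain ⟨g₀, q, ha, hl, rfl⟩ := isPath_of_foldl_eq_some (Option.some.inj h)
    refine ⟨.cons ha hl, ?_⟩
    rw [List.map_cons, List.prod_cons, ha]
    rfl

theorem IsPath.eq_of_uWord {ρ : ℕ → Brandt I G} {n k m : ℕ} {p q : I}
    (hm : 1 ≤ m) (h : IsPath ρ (uWord n k m) p q) : q = p := by
  obtain ⟨j, hj⟩ : ∃ j, 2 * m - 1 = j + 1 := ⟨2 * m - 2, by omega⟩
  rw [uWord, range_add_eq_append, hj] at h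
  obtain ⟨s, hP, hF⟩ := h.of_append
  exact hP.eq_of_append_reverse_append hF.of_flatten_replicate

end Brandt

theorem brandt_satisfies_u_identity {I : Type u} {G : Type v} [CommGroup G]
    (m : ℕ) (hm : 1 ≤ m) (hexp : ∀ g : G, g ^ m = 1) (n k : ℕ) :
    ∀ ρ : ℕ → Brandt I G,
      wEval bmul ρ (uWord n k m) = wEval bmul ρ (uWord n k m ++ uWord n k m) := by
  intro ρ
  rcases hu : wEval bmul ρ (uWord n k m) with _ | x
  · rw [wEval_eq_none_iff.1 hu]
    rfl
  rw [wEval_append hu hu]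
  rcases x with _ | ⟨l, g, r⟩
  · rfl
  obtain ⟨hpath, rfl⟩ := Brandt.isPath_of_wEval_eq_some hu
  rw [hpath.eq_of_uWord hm, prod_map_uWord _ hm, pow_mul, hexp, Brandt.bmul_some_some, mul_one]
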